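/- In the three-covariate counterexample design, X'β = X₁ + X₂ and X'b̃ = X₁ + X₃ have the same sign almost surely: on the event {X₁+X₂ ≥ 0}, X₃ ∈ (1,2) so X₁ + X₃ > 0, and on {X₁+X₂ < 0}, X₃ ∈ (−2,−1) so X₁ + X₃ < 0. Hence b̃ = (1,0,1) ∈ Θ = {b : (X'b)(X'β) ≥ 0 a.s.}. -/

import Mathlib

open MeasureTheory ProbabilityTheory Set

/-- The uniform probability measure on the interval `(a, b)`. -/
noncomputable def uniformOnIoo (a b : ℝ) : Measure ℝ :=
  (ENNReal.ofReal (b - a))⁻¹ • (volume.restrict (Ioo a b))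

lemma ae_mem_Ioo_uniformOnIoo (a b : ℝ) : ∀ᵐ x ∂uniformOnIoo a b, x ∈ Ioo a b :=
  Measure.ae_smul_measure (ae_restrict_mem measurableSet_Ioo) _

lemma ae_mem_Ioo_of_map_eq_uniformOnIoo {Ω : Type*} [MeasurableSpace Ω] {μ : Measure Ω}
    {f : Ω → ℝ} {a b : ℝ} (hf : Measurable f) (hlaw : μ.map f = uniformOnIoo a b) :
    ∀ᵐ ω ∂μ, f ω ∈ Ioo a b :=
  ae_of_ae_map hf.aemeasurable (hlaw ▸ ae_mem_Ioo_uniformOnIoo a b)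

lemma add_ite_sign_agree {x y t₁ t₂ : ℝ} (hx : x ∈ Icc (-1) 1) (ht₁ : 1 < t₁)
    (ht₂ : t₂ < -1) :
    (0 ≤ x + y → 0 < x + if 0 ≤ x + y then t₁ else t₂) ∧
      (x + y < 0 → x + (if 0 ≤ x + y then t₁ else t₂) < 0) := by
  constructor
  · intro h
    rw [if_pos h]
    linarith [hx.1]
  · intro h
    rw [if_neg h.not_ge]
    linarith [hx.2]

lemma mul_nonneg_of_sign_agree {x y : ℝ} (hpos : 0 ≤ y → 0 < x) (hneg : y < 0 → x < 0) :
    0 ≤ x * y := by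
  rcases le_or_gt 0 y with hy | hy
  · exact mul_nonneg (hpos hy).le hy
  · exact mul_nonneg_of_nonpos_of_nonpos (hneg hy).le hy.le

theorem btilde_in_theta_three_covariates_general {Ω : Type*} [MeasurableSpace Ω]
    (μ : Measure Ω)
    (X1 X2 T1 T2 : Ω → ℝ)
    (hX1 : Measurable X1)
    (hT1 : Measurable T1) (hT2 : Measurable T2)
    (hlawX1 : μ.map X1 = uniformOnIoo (-1) 1)
    (hlawT1 : μ.map T1 = uniformOnIoo 1 2)
    (hlawT2 : μ.map T2 = uniformOnIoo (-2) (-1))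
    -- X₃ = T₁ if X₁+X₂ ≥ 0 and X₃ = T₂ if X₁+X₂ < 0
    (X3 : Ω → ℝ)
    (hX3 : ∀ ω, X3 ω = if 0 ≤ X1 ω + X2 ω then T1 ω else T2 ω) :
    (∀ᵐ ω ∂μ,
      (0 ≤ X1 ω + X2 ω → 0 < X1 ω + X3 ω) ∧
      (X1 ω + X2 ω < 0 → X1 ω + X3 ω < 0)) ∧
    (∀ᵐ ω ∂μ, (X1 ω + X3 ω) * (X1 ω + X2 ω) ≥ 0) := by
  have hsign : ∀ᵐ ω ∂μ,
      (0 ≤ X1 ω + X2 ω → 0 < X1 ω + X3 ω) ∧ (X1 ω + X2 ω < 0 → X1 ω + X3 ω < 0) := by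
    filter_upwards [ae_mem_Ioo_of_map_eq_uniformOnIoo hX1 hlawX1,
      ae_mem_Ioo_of_map_eq_uniformOnIoo hT1 hlawT1,
      ae_mem_Ioo_of_map_eq_uniformOnIoo hT2 hlawT2] with ω hx ht₁ ht₂
    rw [hX3]
    exact add_ite_sign_agree (Ioo_subset_Icc_self hx) ht₁.1 ht₂.2
  exact ⟨hsign, hsign.mono fun ω h ↦ mul_nonneg_of_sign_agree h.1 h.2⟩

/-- In the three-covariate counterexample design, `X'β = X₁ + X₂` and
`X'b̃ = X₁ + X₃` have the same sign almost surely: on `{X₁+X₂ ≥ 0}`, `X₃ ∈ (1,2)` so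
`X₁+X₃ > 0`, and on `{X₁+X₂ < 0}`, `X₃ ∈ (−2,−1)` so `X₁+X₃ < 0`. Hence
`b̃ = (1,0,1) ∈ Θ = {b : (X'b)(X'β) ≥ 0 a.s.}`. -/
theorem btilde_in_theta_three_covariates {Ω : Type*} [MeasurableSpace Ω]
    (μ : Measure Ω) [IsProbabilityMeasure μ]
    (X1 X2 T1 T2 : Ω → ℝ)
    (hX1 : Measurable X1) (hX2 : Measurable X2)
    (hT1 : Measurable T1) (hT2 : Measurable T2)
    (hlawX1 : μ.map X1 = uniformOnIoo (-1) 1)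
    (hlawX2 : μ.map X2 = uniformOnIoo (-1) 1)
    (hlawT1 : μ.map T1 = uniformOnIoo 1 2)
    (hlawT2 : μ.map T2 = uniformOnIoo (-2) (-1))
    (hindep : iIndepFun
      ![X1, X2, T1, T2] μ)
    -- X₃ = T₁ if X₁+X₂ ≥ 0 and X₃ = T₂ if X₁+X₂ < 0
    (X3 : Ω → ℝ)
    (hX3 : ∀ ω, X3 ω = if 0 ≤ X1 ω + X2 ω then T1 ω else T2 ω) :
    (∀ᵐ ω ∂μ,
      (0 ≤ X1 ω + X2 ω → 0 < X1 ω + X3 ω) ∧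
      (X1 ω + X2 ω < 0 → X1 ω + X3 ω < 0)) ∧
    (∀ᵐ ω ∂μ, (X1 ω + X3 ω) * (X1 ω + X2 ω) ≥ 0) :=
  btilde_in_theta_three_covariates_general μ X1 X2 T1 T2 hX1 hT1 hT2 hlawX1 hlawT1 hlawT2 X3 hX3
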